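/- Let $M \leq H \leq F$ be profinite groups with $M$ a closed subgroup and $H$ an open subgroup of $F$. Then $M$ is sparse in $F$ if and only if $M$ is sparse in $H$. -/

import Mathlib

/-!
Open subgroups of `H` are exactly the open subgroups of `F` contained in `H`, with the same
relative indices, and `(F : K) = (H : K) (F : H)` for `K ≤ H`; so a witness for sparseness in `H`
is one in `F` and vice versa, provided the witness `K` in `F` lies in `H`. This is arranged by
asking for an index gap `n > (F : H)`: if `K ⊄ H`, then `K ∩ H` is a proper open subgroup of `K`
containing `M` whose index in `K` is at most `(F : H)`.
-/

/-- A closed subgroup `M` of a profinite group `F` is sparse if for all `m n : ℕ` there is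
an open subgroup `K ≥ M` of index at least `m` such that every proper open subgroup of `K`
containing `M` has index at least `n` in `K`. -/
def IsSparse {F : Type*} [Group F] [TopologicalSpace F] (M : Subgroup F) : Prop :=
  ∀ m n : ℕ, ∃ K : Subgroup F, IsOpen (K : Set F) ∧ M ≤ K ∧ m ≤ K.index ∧
    ∀ L : Subgroup F, IsOpen (L : Set F) → M ≤ L → L < K → n ≤ L.relIndex K

namespace Subgroup

variable {G : Type*} [Group G] {H K L : Subgroup G}

theorem subgroupOf_le_subgroupOf_iff (hKH : K ≤ H) :
    K.subgroupOf H ≤ L.subgroupOf H ↔ K ≤ L :=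
  ⟨fun h x hx => h (show (⟨x, hKH hx⟩ : H) ∈ K.subgroupOf H from hx), fun h => comap_mono h⟩

theorem subgroupOf_lt_subgroupOf_iff (hKH : K ≤ H) (hLH : L ≤ H) :
    K.subgroupOf H < L.subgroupOf H ↔ K < L := by
  simp only [lt_iff_le_not_ge, subgroupOf_le_subgroupOf_iff hKH, subgroupOf_le_subgroupOf_iff hLH]

theorem exists_subgroupOf_eq (K' : Subgroup H) : ∃ K ≤ H, K.subgroupOf H = K' :=
  ⟨K'.map H.subtype, map_subtype_le K', comap_map_eq_self_of_injective H.subtype_injective K'⟩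

theorem relIndex_le_index (H K : Subgroup G) [H.FiniteIndex] : H.relIndex K ≤ H.index := by
  simpa using relIndex_le_of_le_right (le_top : K ≤ ⊤) (by simpa using FiniteIndex.index_ne_zero)

variable [TopologicalSpace G]

theorem isOpen_subgroupOf_iff (hH : IsOpen (H : Set G)) (hKH : K ≤ H) :
    IsOpen (K.subgroupOf H : Set H) ↔ IsOpen (K : Set G) := by
  refine ⟨fun h => ?_, H.subgroupOf_isOpen K⟩
  have : IsOpen ((K.subgroupOf H).map H.subtype : Set G) := hH.isOpenMap_subtype_val _ h
  rwa [subgroupOf_map_subtype, inf_eq_left.2 hKH] at this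

theorem finiteIndex_of_isOpen [IsTopologicalGroup G] [CompactSpace G] (hH : IsOpen (H : Set G)) :
    H.FiniteIndex :=
  have := H.quotient_finite_of_isOpen hH
  finiteIndex_of_finite_quotient

end Subgroup

open Subgroup

section IndexGap

variable {G : Type*} [Group G] [TopologicalSpace G]

def HasOpenIndexGap (M K : Subgroup G) (n : ℕ) : Prop :=
  ∀ L : Subgroup G, IsOpen (L : Set G) → M ≤ L → L < K → n ≤ L.relIndex K

namespace HasOpenIndexGap

variable {H M K : Subgroup G} {n : ℕ}

theorem mono {n' : ℕ} (h : HasOpenIndexGap M K n') (hn : n ≤ n') : HasOpenIndexGap M K n :=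
  fun L hL hML hLK => hn.trans (h L hL hML hLK)

theorem subgroupOf_iff (hH : IsOpen (H : Set G)) (hMH : M ≤ H) (hKH : K ≤ H) :
    HasOpenIndexGap (M.subgroupOf H) (K.subgroupOf H) n ↔ HasOpenIndexGap M K n := by
  simp only [HasOpenIndexGap, Subgroup.forall]
  constructor
  · intro h L hL hML hLK
    have hLH : L ≤ H := hLK.le.trans hKH
    rw [← relIndex_subgroupOf hKH]
    exact h L hLH ((isOpen_subgroupOf_iff hH hLH).2 hL) ((subgroupOf_le_subgroupOf_iff hMH).2 hML)
      ((subgroupOf_lt_subgroupOf_iff hLH hKH).2 hLK)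
  · intro h L hLH hL hML hLK
    rw [relIndex_subgroupOf hKH]
    exact h L ((isOpen_subgroupOf_iff hH hLH).1 hL) ((subgroupOf_le_subgroupOf_iff hMH).1 hML)
      ((subgroupOf_lt_subgroupOf_iff hLH hKH).1 hLK)

theorem le_of_index_lt [H.FiniteIndex] (hH : IsOpen (H : Set G)) (hK : IsOpen (K : Set G))
    (hMH : M ≤ H) (hMK : M ≤ K) (hgap : HasOpenIndexGap M K (H.index + 1)) : K ≤ H := by
  by_contra hKH
  have hlt : K ⊓ H < K := inf_le_left.lt_of_ne fun h => hKH (h ▸ inf_le_right)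
  have hgap_inf := hgap (K ⊓ H) (hK.inter hH) (le_inf hMK hMH) hlt
  rw [inf_comm, inf_relIndex_right] at hgap_inf
  exact absurd (relIndex_le_index H K) (by omega)

end HasOpenIndexGap

end IndexGap

theorem sparse_iff_sparse_in_open_subgroup_general (F : Type*) [Group F] [TopologicalSpace F]
    [IsTopologicalGroup F] [CompactSpace F]
    (M H : Subgroup F) (hHopen : IsOpen (H : Set F))
    (hMH : M ≤ H) :
    IsSparse M ↔ IsSparse (M.subgroupOf H) := by
  have := finiteIndex_of_isOpen hHopen
  have hH : 0 < H.index := Nat.pos_of_ne_zero FiniteIndex.index_ne_zero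
  constructor
  · intro hS m n
    obtain ⟨K, hK, hMK, hm, hgap : HasOpenIndexGap M K _⟩ := hS (m * H.index) (max n (H.index + 1))
    have hKH := (hgap.mono (le_max_right _ _)).le_of_index_lt hHopen hK hMH hMK
    refine ⟨K.subgroupOf H, (isOpen_subgroupOf_iff hHopen hKH).2 hK,
      (subgroupOf_le_subgroupOf_iff hMH).2 hMK, ?_,
      (HasOpenIndexGap.subgroupOf_iff hHopen hMH hKH).2 (hgap.mono (le_max_left _ _))⟩
    rw [← relIndex_mul_index hKH] at hm
    exact Nat.le_of_mul_le_mul_right hm hH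
  · intro hS m n
    obtain ⟨K', hK', hMK', hm, hgap⟩ := hS m n
    obtain ⟨K, hKH, rfl⟩ := exists_subgroupOf_eq K'
    refine ⟨K, (isOpen_subgroupOf_iff hHopen hKH).1 hK', (subgroupOf_le_subgroupOf_iff hMH).1 hMK',
      ?_, (HasOpenIndexGap.subgroupOf_iff hHopen hMH hKH).1 hgap⟩
    rw [← relIndex_mul_index hKH]
    exact hm.trans (Nat.le_mul_of_pos_right _ hH)

/-- Corollary 2.3: for `M ≤ H ≤ F` with `M` closed and `H` open, `M` is sparse in `F`
if and only if `M` (viewed as a subgroup of `H`) is sparse in `H`. -/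
theorem sparse_iff_sparse_in_open_subgroup (F : Type*) [Group F] [TopologicalSpace F]
    [IsTopologicalGroup F] [CompactSpace F] [T2Space F] [TotallyDisconnectedSpace F]
    (M H : Subgroup F) (hMclosed : IsClosed (M : Set F)) (hHopen : IsOpen (H : Set F))
    (hMH : M ≤ H) :
    IsSparse M ↔ IsSparse (M.subgroupOf H) :=
  sparse_iff_sparse_in_open_subgroup_general F M H hHopen hMH
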